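/- arXiv:1911.02627 — 2 statements merged into one kernel-verified Lean document; each statement's English description precedes it below -/
import Mathlib

section
/- Let X be a set and let 𝒜, ℬ be collections of subsets of X with ℬ Γ-like and ℬ ⊆ 𝒜. Then Player I has a winning (perfect-information) strategy in G₁(𝒜,ℬ) if and only if Player I has a winning predetermined strategy in G₁(𝒜,ℬ). -/
open Set

/-- A collection `𝒜` of subsets of `X` is Γ-like if every member is infinite
and every infinite subset of a member is itself a member. -/
def GammaLike {X : Type*} (𝒜 : Set (Set X)) : Prop :=
  ∀ A ∈ 𝒜, A.Infinite ∧ ∀ A' ⊆ A, A'.Infinite → A' ∈ 𝒜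

/-- A collection `𝒜` is almost-Γ-like if each `A ∈ 𝒜` has a countably infinite
subset `A'` all of whose cofinite subsets belong to `𝒜`. -/
def AlmostGammaLike {X : Type*} (𝒜 : Set (Set X)) : Prop :=
  ∀ A ∈ 𝒜, ∃ A' ⊆ A, A'.Countable ∧ A'.Infinite ∧
    ∀ A'' ⊆ A', (A' \ A'').Finite → A'' ∈ 𝒜

/-- `𝒜` is closed under finite unions. -/
def UnionClosed {X : Type*} (𝒜 : Set (Set X)) : Prop :=
  ∀ A ∈ 𝒜, ∀ B ∈ 𝒜, A ∪ B ∈ 𝒜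

/-- α₁(𝒜,ℬ): for every sequence from 𝒜 there is `B ∈ ℬ` with `A n \ B` finite for all `n`. -/
def Alpha1 {X : Type*} (𝒜 ℬ : Set (Set X)) : Prop :=
  ∀ A : ℕ → Set X, (∀ n, A n ∈ 𝒜) → ∃ B ∈ ℬ, ∀ n, (A n \ B).Finite

/-- α₂(𝒜,ℬ): for every sequence from 𝒜 there is `B ∈ ℬ` meeting each `A n` infinitely. -/
def Alpha2 {X : Type*} (𝒜 ℬ : Set (Set X)) : Prop :=
  ∀ A : ℕ → Set X, (∀ n, A n ∈ 𝒜) → ∃ B ∈ ℬ, ∀ n, (A n ∩ B).Infinite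

/-- α₂'(𝒜,ℬ): for every sequence from 𝒜 there is `B ∈ ℬ` meeting each `A n`. -/
def Alpha2' {X : Type*} (𝒜 ℬ : Set (Set X)) : Prop :=
  ∀ A : ℕ → Set X, (∀ n, A n ∈ 𝒜) → ∃ B ∈ ℬ, ∀ n, (A n ∩ B).Nonempty

/-- α₃(𝒜,ℬ): for every sequence from 𝒜 there is `B ∈ ℬ` meeting infinitely many `A n` infinitely. -/
def Alpha3 {X : Type*} (𝒜 ℬ : Set (Set X)) : Prop :=
  ∀ A : ℕ → Set X, (∀ n, A n ∈ 𝒜) → ∃ B ∈ ℬ, {n | (A n ∩ B).Infinite}.Infinite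

/-- α₄(𝒜,ℬ): for every sequence from 𝒜 there is `B ∈ ℬ` meeting infinitely many `A n`. -/
def Alpha4 {X : Type*} (𝒜 ℬ : Set (Set X)) : Prop :=
  ∀ A : ℕ → Set X, (∀ n, A n ∈ 𝒜) → ∃ B ∈ ℬ, {n | (A n ∩ B).Nonempty}.Infinite

/-- α_{1.1}(𝒜,ℬ): α₁ restricted to pairwise disjoint sequences. -/
def Alpha1p1 {X : Type*} (𝒜 ℬ : Set (Set X)) : Prop :=
  ∀ A : ℕ → Set X, (∀ n, A n ∈ 𝒜) → (∀ m n, m ≠ n → Disjoint (A m) (A n)) →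
    ∃ B ∈ ℬ, ∀ n, (A n \ B).Finite

/-- α_{1.5}(𝒜,ℬ): for pairwise disjoint sequences from 𝒜 there is `B ∈ ℬ` with
`A n \ B` finite for infinitely many `n`. -/
def Alpha1p5 {X : Type*} (𝒜 ℬ : Set (Set X)) : Prop :=
  ∀ A : ℕ → Set X, (∀ n, A n ∈ 𝒜) → (∀ m n, m ≠ n → Disjoint (A m) (A n)) →
    ∃ B ∈ ℬ, {n | (A n \ B).Finite}.Infinite

/-- α_{2.1}(𝒜,ℬ): α₂ restricted to pairwise disjoint sequences. -/
def Alpha2p1 {X : Type*} (𝒜 ℬ : Set (Set X)) : Prop :=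
  ∀ A : ℕ → Set X, (∀ n, A n ∈ 𝒜) → (∀ m n, m ≠ n → Disjoint (A m) (A n)) →
    ∃ B ∈ ℬ, ∀ n, (A n ∩ B).Infinite

/-- α_{3.1}(𝒜,ℬ): α₃ restricted to pairwise disjoint sequences. -/
def Alpha3p1 {X : Type*} (𝒜 ℬ : Set (Set X)) : Prop :=
  ∀ A : ℕ → Set X, (∀ n, A n ∈ 𝒜) → (∀ m n, m ≠ n → Disjoint (A m) (A n)) →
    ∃ B ∈ ℬ, {n | (A n ∩ B).Infinite}.Infinite

/-- α_{4.1}(𝒜,ℬ): α₄ restricted to pairwise disjoint sequences. -/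
def Alpha4p1 {X : Type*} (𝒜 ℬ : Set (Set X)) : Prop :=
  ∀ A : ℕ → Set X, (∀ n, A n ∈ 𝒜) → (∀ m n, m ≠ n → Disjoint (A m) (A n)) →
    ∃ B ∈ ℬ, {n | (A n ∩ B).Nonempty}.Infinite

/-- Player I has a winning predetermined strategy in G₁(𝒜,ℬ). -/
def PredWinG1 {X : Type*} (𝒜 ℬ : Set (Set X)) : Prop :=
  ∃ A : ℕ → Set X, (∀ n, A n ∈ 𝒜) ∧
    ∀ a : ℕ → X, (∀ n, a n ∈ A n) → Set.range a ∉ ℬ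

/-- Player I has a winning predetermined strategy in G_fin(𝒜,ℬ). -/
def PredWinGfin {X : Type*} (𝒜 ℬ : Set (Set X)) : Prop :=
  ∃ A : ℕ → Set X, (∀ n, A n ∈ 𝒜) ∧
    ∀ F : ℕ → Set X, (∀ n, (F n).Finite ∧ F n ⊆ A n) → (⋃ n, F n) ∉ ℬ

/-- Player I has a winning predetermined strategy in G_{<2}(𝒜,ℬ),
where II picks at most one point each round. -/
def PredWinGlt2 {X : Type*} (𝒜 ℬ : Set (Set X)) : Prop :=
  ∃ A : ℕ → Set X, (∀ n, A n ∈ 𝒜) ∧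
    ∀ F : ℕ → Set X, (∀ n, (F n).Subsingleton ∧ F n ⊆ A n) → (⋃ n, F n) ∉ ℬ

/-- Player I has a winning predetermined strategy in G_cf(𝒜,ℬ),
where II picks a cofinite subset each round. -/
def PredWinGcf {X : Type*} (𝒜 ℬ : Set (Set X)) : Prop :=
  ∃ A : ℕ → Set X, (∀ n, A n ∈ 𝒜) ∧
    ∀ B : ℕ → Set X, (∀ n, B n ⊆ A n ∧ (A n \ B n).Finite) → (⋃ n, B n) ∉ ℬ

/-- Player I has a winning perfect-information strategy in G₁(𝒜,ℬ):
a function from finite sequences of points of X into 𝒜 defeating all counterplays. -/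
def WinG1 {X : Type*} (𝒜 ℬ : Set (Set X)) : Prop :=
  ∃ σ : List X → Set X, (∀ s, σ s ∈ 𝒜) ∧
    ∀ a : ℕ → X, (∀ n, a n ∈ σ (List.ofFn fun i : Fin n => a i)) → Set.range a ∉ ℬ

/-- Player I has a winning perfect-information strategy in G_fin(𝒜,ℬ):
a function from finite sequences of finite subsets of X into 𝒜 defeating all counterplays. -/
def WinGfin {X : Type*} (𝒜 ℬ : Set (Set X)) : Prop :=
  ∃ σ : List (Set X) → Set X, (∀ s : List (Set X), (∀ F ∈ s, F.Finite) → σ s ∈ 𝒜) ∧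
    ∀ F : ℕ → Set X,
      (∀ n, (F n).Finite ∧ F n ⊆ σ (List.ofFn fun i : Fin n => F i)) →
      (⋃ n, F n) ∉ ℬ

/-- Player I has a winning perfect-information strategy in G_{<2}(𝒜,ℬ):
a function from finite sequences of at-most-singleton subsets of X into 𝒜
defeating all counterplays. -/
def WinGlt2 {X : Type*} (𝒜 ℬ : Set (Set X)) : Prop :=
  ∃ σ : List (Set X) → Set X, (∀ s : List (Set X), (∀ F ∈ s, F.Subsingleton) → σ s ∈ 𝒜) ∧
    ∀ F : ℕ → Set X,
      (∀ n, (F n).Subsingleton ∧ F n ⊆ σ (List.ofFn fun i : Fin n => F i)) →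
      (⋃ n, F n) ∉ ℬ

/-!
A predetermined strategy is a special perfect-information one, so only the forward direction
has content. Suppose σ wins for I but no predetermined strategy does. Playing against the
constant sequence `σ s` gives, for every position `s`, a countable `C s ∈ ℬ` inside `σ s`
avoiding the points of `s`. The positions reachable by answering from `C` form a countable
tree; enumerating it and letting II defeat the predetermined strategy `n ↦ C (position n)`
produces one set `R ∈ ℬ` that meets `C s` at every reachable position. A play answering
from `C s ∩ R` is legal against σ, injective, and has range an infinite subset of `R`, hence
in `ℬ`.
-/

section

variable {X : Type*}

section GammaLike

variable {ℬ : Set (Set X)} {A S : Set X}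

lemma GammaLike.mem_of_subset (hB : GammaLike ℬ) (hA : A ∈ ℬ) (hSA : S ⊆ A)
    (hS : S.Infinite) : S ∈ ℬ :=
  (hB A hA).2 S hSA hS

lemma GammaLike.diff_mem (hB : GammaLike ℬ) (hA : A ∈ ℬ) (hS : S.Finite) : A \ S ∈ ℬ :=
  hB.mem_of_subset hA sdiff_subset ((hB A hA).1.sdiff hS)

end GammaLike

section Plays

variable (C : List X → Set X)

def reachablePositions : ℕ → Set (List X)
  | 0 => {[]}
  | n + 1 => ⋃ s ∈ reachablePositions n, (fun x => s ++ [x]) '' C s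

lemma countable_iUnion_reachablePositions (hC : ∀ s, (C s).Countable) :
    (⋃ n, reachablePositions C n).Countable := by
  refine countable_iUnion fun n => ?_
  induction n with
  | zero => exact countable_singleton _
  | succ n ih => exact ih.biUnion fun s _ => (hC s).image _

lemma exists_play_inter (R : Set X)
    (h : ∀ n, ∀ s ∈ reachablePositions C n, (C s ∩ R).Nonempty) :
    ∃ b : ℕ → X, ∀ n, b n ∈ C (List.ofFn fun i : Fin n => b i) ∩ R := by
  have : Nonempty X := ⟨(h 0 [] rfl).some⟩
  choose! g hg using h
  let L : ℕ → List X := fun n => Nat.rec [] (fun k s => s ++ [g k s]) n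
  have hL_mem : ∀ n, L n ∈ reachablePositions C n := by
    intro n
    induction n with
    | zero => rfl
    | succ n ih => exact mem_biUnion ih ⟨g n (L n), (hg n _ ih).1, rfl⟩
  have hL_eq : ∀ n, L n = List.ofFn fun i : Fin n => g i (L i) := by
    intro n
    induction n with
    | zero => rfl
    | succ n ih =>
      simp only [List.ofFn_succ', Fin.val_castSucc, Fin.val_last, ← ih, List.concat_eq_append]
      rfl
  exact ⟨fun n => g n (L n), fun n => hL_eq n ▸ hg n _ (hL_mem n)⟩

lemma injective_of_mem_fresh (hC : ∀ s, ∀ x ∈ C s, x ∉ s) {b : ℕ → X}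
    (hb : ∀ n, b n ∈ C (List.ofFn fun i : Fin n => b i)) : Function.Injective b :=
  Function.Injective.of_lt_imp_ne fun m n hmn heq =>
    hC _ _ (hb n) (heq ▸ List.mem_ofFn.2 ⟨⟨m, hmn⟩, rfl⟩)

end Plays

variable {𝒜 ℬ : Set (Set X)}

lemma PredWinG1.winG1 (h : PredWinG1 𝒜 ℬ) : WinG1 𝒜 ℬ := by
  obtain ⟨A, hA, hwin⟩ := h
  exact ⟨fun s => A s.length, fun s => hA _, fun a ha => hwin a fun n => by simpa using ha n⟩

lemma WinG1.predWinG1 (hB : GammaLike ℬ) (hBA : ℬ ⊆ 𝒜) (h : WinG1 𝒜 ℬ) :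
    PredWinG1 𝒜 ℬ := by
  obtain ⟨σ, hσ, hwin⟩ := h
  by_contra hpred
  simp only [PredWinG1, not_exists, not_and, not_forall, not_not, exists_prop] at hpred
  have hfresh : ∀ s : List X, ∃ C ∈ ℬ, C ⊆ σ s ∧ C.Countable ∧ ∀ x ∈ C, x ∉ s := by
    intro s
    obtain ⟨a, ha, haℬ⟩ := hpred (fun _ => σ s) fun _ => hσ s
    exact ⟨range a \ {x | x ∈ s}, hB.diff_mem haℬ s.finite_toSet,
      sdiff_subset.trans (range_subset_iff.2 ha), (countable_range a).mono sdiff_subset,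
      fun x hx => hx.2⟩
  choose C hCℬ hCσ hCc hCs using hfresh
  obtain ⟨f, hf⟩ := (countable_iUnion_reachablePositions C hCc).exists_eq_range
    ⟨[], mem_iUnion.2 ⟨0, rfl⟩⟩
  obtain ⟨a, ha, haℬ⟩ := hpred (fun m => C (f m)) fun m => hBA (hCℬ _)
  obtain ⟨b, hb⟩ := exists_play_inter C (range a) fun n s hs => by
    obtain ⟨m, rfl⟩ : s ∈ range f := hf ▸ mem_iUnion.2 ⟨n, hs⟩
    exact ⟨a m, ha m, mem_range_self m⟩
  refine hwin b (fun n => hCσ _ (hb n).1) (hB.mem_of_subset haℬ ?_ ?_)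
  · exact range_subset_iff.2 fun n => (hb n).2
  · exact infinite_range_of_injective (injective_of_mem_fresh C hCs fun n => (hb n).1)

end

/-- If ℬ is Γ-like and ℬ ⊆ 𝒜, Player I has a winning perfect-information strategy
in G₁(𝒜,ℬ) iff Player I has a winning predetermined strategy there. -/
theorem stmt10 {X : Type*} (𝒜 ℬ : Set (Set X))
    (hB : GammaLike ℬ) (hBA : ℬ ⊆ 𝒜) :
    WinG1 𝒜 ℬ ↔ PredWinG1 𝒜 ℬ :=
  ⟨WinG1.predWinG1 hB hBA, PredWinG1.winG1⟩
end

section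
/- Let X be a set and let 𝒜, ℬ be collections of subsets of X with 𝒜 Γ-like. Then α₂(𝒜,ℬ) holds if and only if α_{2.1}(𝒜,ℬ) holds. -/
open Set

/-!
In a Γ-like family every sequence `A n` can be shrunk to pairwise disjoint infinite `C n ⊆ A n`,
which are again members; a set meeting every `C n` in an infinite set does the same for `A n`.
The disjoint shrinking comes from an injective choice of points, one from `A i` for each pair `(i, k)`.
-/

open Function

/-- Distinct representatives exist by Hall's theorem applied to finite subsets `t n ⊆ s n` with
`n + 1` elements: any `k` indices include one `m ≥ k - 1`, and `t m` alone has `m + 1 ≥ k` elements. -/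
theorem Set.exists_injective_forall_mem_of_infinite {X : Type*} {s : ℕ → Set X}
    (hs : ∀ n, (s n).Infinite) : ∃ f : ℕ → X, Injective f ∧ ∀ n, f n ∈ s n := by
  classical
  choose t hts hcard using fun n => (hs n).exists_subset_card_eq (n + 1)
  have hHall : ∀ S : Finset ℕ, S.card ≤ (S.biUnion t).card := by
    intro S
    rcases S.eq_empty_or_nonempty with rfl | hS
    · simp
    calc S.card ≤ (Finset.range (S.max' hS + 1)).card :=
          Finset.card_le_card fun k hk => Finset.mem_range_succ_iff.mpr (S.le_max' k hk)
      _ = (t (S.max' hS)).card := by rw [Finset.card_range, hcard]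
      _ ≤ (S.biUnion t).card := Finset.card_le_card (Finset.subset_biUnion_of_mem t (S.max'_mem hS))
  obtain ⟨f, hf, hft⟩ := (Finset.all_card_le_biUnion_card_iff_exists_injective t).mp hHall
  exact ⟨f, hf, fun n => hts n (hft n)⟩

theorem Set.exists_pairwise_disjoint_infinite_subsets {X : Type*} {A : ℕ → Set X}
    (hA : ∀ n, (A n).Infinite) :
    ∃ C : ℕ → Set X, (∀ n, C n ⊆ A n) ∧ (∀ n, (C n).Infinite) ∧ Pairwise (Disjoint on C) := by
  obtain ⟨f, hf, hfA⟩ :=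
    Set.exists_injective_forall_mem_of_infinite (s := fun j => A j.unpair.1) fun j => hA _
  refine ⟨fun n => range fun k => f (Nat.pair n k), ?_, ?_, ?_⟩
  · rintro n _ ⟨k, rfl⟩
    simpa using hfA (Nat.pair n k)
  · exact fun n => infinite_range_of_injective fun k l hkl => (Nat.pair_eq_pair.mp (hf hkl)).2
  · intro m n hmn
    refine disjoint_left.mpr ?_
    rintro _ ⟨k, rfl⟩ ⟨l, hl⟩
    exact hmn (Nat.pair_eq_pair.mp (hf hl)).1.symm

/-- If 𝒜 is Γ-like, then α₂(𝒜,ℬ) holds iff α_{2.1}(𝒜,ℬ) holds. -/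
theorem stmt13 {X : Type*} (𝒜 ℬ : Set (Set X))
    (hA : GammaLike 𝒜) :
    Alpha2 𝒜 ℬ ↔ Alpha2p1 𝒜 ℬ := by
  refine ⟨fun h2 A hA𝒜 _ => h2 A hA𝒜, fun h21 A hA𝒜 => ?_⟩
  obtain ⟨C, hCA, hCinf, hCdisj⟩ :=
    Set.exists_pairwise_disjoint_infinite_subsets fun n => (hA _ (hA𝒜 n)).1
  have hC𝒜 : ∀ n, C n ∈ 𝒜 := fun n => (hA _ (hA𝒜 n)).2 _ (hCA n) (hCinf n)
  obtain ⟨B, hBℬ, hCB⟩ := h21 C hC𝒜 fun m n hmn => hCdisj hmn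
  exact ⟨B, hBℬ, fun n => (hCB n).mono (inter_subset_inter_left B (hCA n))⟩
end
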